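/- Suppose X is a c-quasiconvex metric space, Y is a c′-quasiconvex metric space, G ⊊ X and G′ ⊊ Y are domains, and f : G → G′ is an M-quasihyperbolic homeomorphism. Then for every subdomain D ⊂ G and every x ∈ D, δ_D(x)/δ_{f(D)}(f(x)) ≤ 6cc′M·δ_G(x)/δ_{G′}(f(x)). -/

import Mathlib

open Metric Set Filter

section QHDefs

variable {X : Type*} [MetricSpace X] {Y : Type*} [MetricSpace Y]

/-- Distance to the boundary of `G`. -/
noncomputable def bdist (G : Set X) (z : X) : ℝ := Metric.infDist z (frontier G)

/-- A unit-speed (1-Lipschitz, arclength-parametrized) rectifiable curve in `G`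
from `x` to `y`, parametrized on `[0, L]`, where `L` is its length. -/
structure CurveIn (G : Set X) (γ : ℝ → X) (L : ℝ) (x y : X) : Prop where
  nonneg : 0 ≤ L
  lip : LipschitzOnWith 1 γ (Set.Icc 0 L)
  source : γ 0 = x
  target : γ L = y
  mem : ∀ t ∈ Set.Icc 0 L, γ t ∈ G

/-- Quasihyperbolic length of the subcurve `γ|[s,t]` in `G`: `∫_γ |dz|/δ_G(z)`. -/
noncomputable def qhLengthOn (G : Set X) (γ : ℝ → X) (s t : ℝ) : ℝ :=
  ∫ u in s..t, 1 / bdist G (γ u)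

/-- Quasihyperbolic length of a curve parametrized on `[0,L]`. -/
noncomputable def qhLength (G : Set X) (γ : ℝ → X) (L : ℝ) : ℝ := qhLengthOn G γ 0 L

/-- Quasihyperbolic distance in `G`. -/
noncomputable def qhDist (G : Set X) (x y : X) : ℝ :=
  sInf {l | ∃ γ L, CurveIn G γ L x y ∧ qhLength G γ L = l}

/-- `X` is a `c`-quasiconvex metric space. -/
def QCSpace (c : ℝ) (X : Type*) [MetricSpace X] : Prop :=
  ∀ x y : X, ∃ γ L, CurveIn (Set.univ : Set X) γ L x y ∧ L ≤ c * dist x y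

/-- A set `G` is `c`-quasiconvex. -/
def QCSet (c : ℝ) (G : Set X) : Prop :=
  ∀ x ∈ G, ∀ y ∈ G, ∃ γ L, CurveIn G γ L x y ∧ L ≤ c * dist x y

/-- A domain: a nonempty connected open set. -/
def IsDomainSet (G : Set X) : Prop := IsOpen G ∧ IsConnected G

/-- A proper domain: a nonempty connected open set, different from the whole space. -/
def IsProperDomain (G : Set X) : Prop := IsOpen G ∧ IsConnected G ∧ G ≠ Set.univ

/-- `G` is an `a`-John domain: each pair of points is joined by a rectifiable arc
satisfying the cone condition. -/
def IsJohn (a : ℝ) (G : Set X) : Prop :=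
  ∀ x ∈ G, ∀ y ∈ G, ∃ γ L, CurveIn G γ L x y ∧
    ∀ t ∈ Set.Icc 0 L, min t (L - t) ≤ a * bdist G (γ t)

/-- `G` is a `b`-uniform domain: each pair of points is joined by a double `b`-cone arc. -/
def IsUniform (b : ℝ) (G : Set X) : Prop :=
  ∀ x ∈ G, ∀ y ∈ G, ∃ γ L, CurveIn G γ L x y ∧ L ≤ b * dist x y ∧
    ∀ t ∈ Set.Icc 0 L, min t (L - t) ≤ b * bdist G (γ t)

/-- `G` is a locally `a`-John domain. -/
def LocallyJohn (a : ℝ) (G : Set X) : Prop :=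
  ∀ x ∈ G, ∀ r : ℝ, 0 < r → r ≤ bdist G x → IsJohn a (Metric.ball x r)

/-- The `h`-coarse quasihyperbolic length of the subcurve `γ|[s,t]` in `G`:
the supremum of sums `Σ k_G(x_{j-1},x_j)` over `h`-coarse sequences of successive
points of the arc (with the convention that it is `0` if there are none). -/
noncomputable def coarseQHLength (G : Set X) (γ : ℝ → X) (s t h : ℝ) : ℝ :=
  sSup {S | ∃ n : ℕ, 0 < n ∧ ∃ u : ℕ → ℝ,
    (∀ i < n, u i ≤ u (i + 1)) ∧ (∀ i ≤ n, u i ∈ Set.Icc s t) ∧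
    (∀ i < n, h ≤ qhDist G (γ (u i)) (γ (u (i + 1)))) ∧
    S = ∑ i ∈ Finset.range n, qhDist G (γ (u i)) (γ (u (i + 1)))}

/-- `γ` (parametrized on `[0,L]`) is a `(ν,h)`-solid arc in `G`. -/
def SolidArc (G : Set X) (γ : ℝ → X) (L ν h : ℝ) : Prop :=
  ∀ s t : ℝ, 0 ≤ s → s ≤ t → t ≤ L →
    coarseQHLength G γ s t h ≤ ν * qhDist G (γ s) (γ t)

/-- `γ` (parametrized on `[0,L]`) is an `ε`-short arc in `G`. -/
def ShortArc (G : Set X) (γ : ℝ → X) (L ε : ℝ) : Prop :=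
  qhLength G γ L ≤ qhDist G (γ 0) (γ L) + ε

/-- A map is weakly `H`-quasisymmetric. -/
def WeakQS (H : ℝ) (f : X → Y) : Prop :=
  ∀ x a b : X, dist x a ≤ dist x b → dist (f x) (f a) ≤ H * dist (f x) (f b)

/-- Image of a subset `D ⊆ G` under a homeomorphism `f : G ≃ₜ G'`, as a subset of `Y`. -/
def imSet {G : Set X} {G' : Set Y} (f : ↥G ≃ₜ ↥G') (D : Set X) : Set Y :=
  Subtype.val '' (f '' (Subtype.val ⁻¹' D))

/-- `f : G ≃ₜ G'` is `M`-quasihyperbolic. -/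
def MQH (M : ℝ) {G : Set X} {G' : Set Y} (f : ↥G ≃ₜ ↥G') : Prop :=
  ∀ x y : ↥G, (1 / M) * qhDist G ↑x ↑y ≤ qhDist G' ↑(f x) ↑(f y) ∧
    qhDist G' ↑(f x) ↑(f y) ≤ M * qhDist G ↑x ↑y

/-- `f : G ≃ₜ G'` is `C`-coarsely `M`-quasihyperbolic. -/
def CQH (M C : ℝ) {G : Set X} {G' : Set Y} (f : ↥G ≃ₜ ↥G') : Prop :=
  ∀ x y : ↥G, (qhDist G ↑x ↑y - C) / M ≤ qhDist G' ↑(f x) ↑(f y) ∧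
    qhDist G' ↑(f x) ↑(f y) ≤ M * qhDist G ↑x ↑y + C

/-- `f : G ≃ₜ G'` is freely `φ`-quasiconformal: in every subdomain, the
quasihyperbolic distances of `f` and `f⁻¹` are controlled by `φ`. -/
def FQC (φ : ℝ → ℝ) {G : Set X} {G' : Set Y} (f : ↥G ≃ₜ ↥G') : Prop :=
  ∀ D : Set X, ∀ hD : D ⊆ G, IsDomainSet D →
    ∀ x : X, ∀ hx : x ∈ D, ∀ y : X, ∀ hy : y ∈ D,
      qhDist (imSet f D) ↑(f ⟨x, hD hx⟩) ↑(f ⟨y, hD hy⟩) ≤ φ (qhDist D x y) ∧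
      qhDist D x y ≤ φ (qhDist (imSet f D) ↑(f ⟨x, hD hx⟩) ↑(f ⟨y, hD hy⟩))

end QHDefs

section Aux

open Real intervalIntegral

variable {X : Type*} [MetricSpace X] {Y : Type*} [MetricSpace Y]

lemma bdist_nonneg (G : Set X) (z : X) : 0 ≤ bdist G z := Metric.infDist_nonneg

lemma bdist_le_add (G : Set X) (a b : X) : bdist G a ≤ bdist G b + dist a b :=
  Metric.infDist_le_infDist_add_dist

lemma bdist_le_dist {G : Set X} {w : X} (hw : w ∈ frontier G) (z : X) :
    bdist G z ≤ dist z w := Metric.infDist_le_dist_of_mem hw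

lemma bdist_pos {G : Set X} (hG : IsOpen G) {z : X} (hz : z ∈ G)
    (hne : (frontier G).Nonempty) : 0 < bdist G z := by
  rw [bdist, ← isClosed_frontier.notMem_iff_infDist_pos hne]
  intro h
  exact (hG.frontier_eq ▸ h).2 hz

lemma frontier_nonempty' [PreconnectedSpace X] {G : Set X}
    (h1 : G.Nonempty) (h2 : G ≠ Set.univ) : (frontier G).Nonempty := by
  by_contra h
  rw [Set.not_nonempty_iff_eq_empty, frontier_eq_empty_iff] at h
  rcases h with h | h
  · exact h1.ne_empty h
  · exact h2 h

lemma CurveIn.dist_le {G : Set X} {γ : ℝ → X} {L : ℝ} {x y : X}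
    (h : CurveIn G γ L x y) {s t : ℝ} (hs : s ∈ Set.Icc 0 L) (ht : t ∈ Set.Icc 0 L) :
    dist (γ s) (γ t) ≤ |s - t| := by
  have := h.lip.dist_le_mul s hs t ht
  simpa [Real.dist_eq] using this

lemma qcspace_preconnected {c : ℝ} (hX : QCSpace c X) : PreconnectedSpace X := by
  rcases isEmpty_or_nonempty X with hE | hN
  · exact ⟨by rw [Set.univ_eq_empty_iff.mpr hE]; exact isPreconnected_empty⟩
  · obtain ⟨x⟩ := hN
    refine ⟨isPreconnected_of_forall x fun y _ => ?_⟩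
    obtain ⟨γ, L, hγ, -⟩ := hX x y
    refine ⟨γ '' Set.Icc 0 L, Set.subset_univ _, ?_, ?_, ?_⟩
    · exact ⟨0, ⟨le_refl 0, hγ.nonneg⟩, hγ.source⟩
    · exact ⟨L, ⟨hγ.nonneg, le_refl L⟩, hγ.target⟩
    · exact isPreconnected_Icc.image γ hγ.lip.continuousOn

lemma CurveIn.const {G : Set X} {x : X} (hx : x ∈ G) :
    CurveIn G (fun _ => x) 0 x x :=
  ⟨le_refl 0, by rw [lipschitzOnWith_iff_dist_le_mul]; intro a _ b _; simp [dist_nonneg], rfl, rfl,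
    fun _ _ => hx⟩

lemma CurveIn.restrict {G : Set X} {γ : ℝ → X} {L : ℝ} {x y : X}
    (h : CurveIn G γ L x y) {t : ℝ} (ht : t ∈ Set.Icc 0 L) :
    CurveIn G γ t x (γ t) :=
  ⟨ht.1, h.lip.mono (Set.Icc_subset_Icc le_rfl ht.2), h.source, rfl,
    fun u hu => h.mem u ⟨hu.1, hu.2.trans ht.2⟩⟩

lemma CurveIn.rev {G : Set X} {γ : ℝ → X} {L : ℝ} {x y : X}
    (h : CurveIn G γ L x y) : CurveIn G (fun t => γ (L - t)) L y x := by
  have hmem : ∀ t ∈ Set.Icc 0 L, L - t ∈ Set.Icc 0 L := fun t ht =>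
    ⟨by linarith [ht.2], by linarith [ht.1]⟩
  refine ⟨h.nonneg, ?_, by simpa using h.target, by simpa using h.source,
    fun t ht => h.mem _ (hmem t ht)⟩
  rw [lipschitzOnWith_iff_dist_le_mul]
  intro s hs t ht
  have := h.lip.dist_le_mul (L - s) (hmem s hs) (L - t) (hmem t ht)
  simp only [NNReal.coe_one, one_mul, Real.dist_eq] at this ⊢
  have e : L - s - (L - t) = t - s := by ring
  rw [e] at this
  rw [abs_sub_comm]
  exact this

lemma CurveIn.concat {G : Set X} {γ₁ γ₂ : ℝ → X} {L₁ L₂ : ℝ} {x y z : X}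
    (h₁ : CurveIn G γ₁ L₁ x y) (h₂ : CurveIn G γ₂ L₂ y z) :
    CurveIn G (fun t => if t ≤ L₁ then γ₁ t else γ₂ (t - L₁)) (L₁ + L₂) x z := by
  set γ := fun t => if t ≤ L₁ then γ₁ t else γ₂ (t - L₁) with hγ
  have key : ∀ s ∈ Set.Icc 0 (L₁ + L₂), ∀ t ∈ Set.Icc 0 (L₁ + L₂), s ≤ t →
      dist (γ s) (γ t) ≤ t - s := by
    intro s hs t ht hst
    by_cases h1 : s ≤ L₁ <;> by_cases h2 : t ≤ L₁ <;> simp only [hγ, h1, h2, if_true, if_false]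
    · have := h₁.dist_le (s := s) (t := t) ⟨hs.1, h1⟩ ⟨ht.1, h2⟩
      rw [abs_of_nonpos (by linarith)] at this; linarith
    · have e1 := h₁.dist_le (s := s) (t := L₁) ⟨hs.1, h1⟩ ⟨h₁.nonneg, le_rfl⟩
      have e2 := h₂.dist_le (s := (0:ℝ)) (t := t - L₁) ⟨le_rfl, h₂.nonneg⟩
        ⟨by linarith, by linarith [ht.2]⟩
      rw [abs_of_nonpos (by linarith)] at e1
      rw [abs_of_nonpos (by linarith)] at e2
      rw [h₁.target] at e1
      rw [h₂.source] at e2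
      calc dist (γ₁ s) (γ₂ (t - L₁)) ≤ dist (γ₁ s) y + dist y (γ₂ (t - L₁)) := dist_triangle _ _ _
        _ ≤ t - s := by push_neg at h2; linarith
    · exact absurd (hst.trans h2) h1
    · have := h₂.dist_le (s := s - L₁) (t := t - L₁)
        ⟨by push_neg at h1; linarith, by linarith [hs.2]⟩
        ⟨by push_neg at h2; linarith, by linarith [ht.2]⟩
      rw [abs_of_nonpos (by linarith)] at this; linarith
  have hL₁ : (0:ℝ) ≤ L₁ := h₁.nonneg
  have hL₂ : (0:ℝ) ≤ L₂ := h₂.nonneg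
  refine ⟨by linarith, ?_, ?_, ?_, ?_⟩
  · rw [lipschitzOnWith_iff_dist_le_mul]
    intro s hs t ht
    rcases le_total s t with h | h
    · have := key s hs t ht h
      simp only [NNReal.coe_one, one_mul, Real.dist_eq]
      rw [abs_of_nonpos (by linarith)]; linarith
    · have := key t ht s hs h
      simp only [NNReal.coe_one, one_mul, Real.dist_eq]
      rw [dist_comm, abs_of_nonneg (by linarith)]; linarith
  · simp only [hγ, if_pos hL₁]; exact h₁.source
  · by_cases h : L₁ + L₂ ≤ L₁
    · have hL0 : L₂ = 0 := le_antisymm (by linarith) hL₂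
      have e : γ (L₁ + L₂) = γ₁ L₁ := by simp [hγ, hL0]
      rw [e, h₁.target, ← h₂.source, ← h₂.target, hL0]
    · simp only [hγ, if_neg h, add_sub_cancel_left, h₂.target]
  · intro t ht
    by_cases h : t ≤ L₁
    · simp only [hγ, if_pos h]; exact h₁.mem t ⟨ht.1, h⟩
    · simp only [hγ, if_neg h]
      exact h₂.mem (t - L₁) ⟨by push_neg at h; linarith, by linarith [ht.2]⟩

end Aux

section Aux2

open Real intervalIntegral

variable {X : Type*} [MetricSpace X] {Y : Type*} [MetricSpace Y]

lemma exit_time {D : Set X} (hD : IsOpen D) {γ : ℝ → X} {L : ℝ} {x w : X}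
    (h : CurveIn Set.univ γ L x w) (hx : x ∈ D) (hw : w ∉ D) :
    ∃ t0 ∈ Set.Icc (0:ℝ) L, γ t0 ∈ frontier D ∧ ∀ t, 0 ≤ t → t < t0 → γ t ∈ D := by
  set S := Set.Icc 0 L ∩ γ ⁻¹' Dᶜ with hS
  have hSne : S.Nonempty := ⟨L, ⟨h.nonneg, le_rfl⟩, by simpa [h.target] using hw⟩
  have hScl : IsClosed S :=
    h.lip.continuousOn.preimage_isClosed_of_isClosed isClosed_Icc hD.isClosed_compl
  have hSbd : BddBelow S := ⟨0, fun t ht => ht.1.1⟩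
  set t0 := sInf S with ht0
  have ht0S : t0 ∈ S := hScl.csInf_mem hSne hSbd
  have hbefore : ∀ t, 0 ≤ t → t < t0 → γ t ∈ D := by
    intro t ht htlt
    by_contra hc
    exact absurd (csInf_le hSbd ⟨⟨ht, le_trans htlt.le ht0S.1.2⟩, hc⟩) (not_le.mpr htlt)
  have ht0pos : 0 < t0 := by
    rcases lt_or_eq_of_le ht0S.1.1 with h' | h'
    · exact h'
    · exact absurd (by rw [← h', h.source]; exact hx) ht0S.2
  refine ⟨t0, ht0S.1, ?_, hbefore⟩
  rw [hD.frontier_eq]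
  refine ⟨?_, ht0S.2⟩
  have hcw : ContinuousWithinAt γ (Set.Ico 0 t0) t0 :=
    (h.lip.continuousOn t0 ht0S.1).mono
      (fun u hu => ⟨hu.1, le_trans hu.2.le ht0S.1.2⟩)
  have hmemc : t0 ∈ closure (Set.Ico 0 t0) := by
    rw [closure_Ico ht0pos.ne]
    exact ⟨ht0S.1.1, le_rfl⟩
  have := hcw.mem_closure_image hmemc
  refine closure_mono ?_ this
  rintro _ ⟨u, hu, rfl⟩
  exact hbefore u hu.1 hu.2

lemma local_join {c : ℝ} (hX : QCSpace c X) {D : Set X} (hD : IsOpen D)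
    {y z : X} (hy : y ∈ D) (hlt : c * dist y z < bdist D y) :
    ∃ γ L, CurveIn D γ L y z ∧ L ≤ c * dist y z := by
  obtain ⟨γ, L, hγ, hL⟩ := hX y z
  have hall : ∀ t ∈ Set.Icc (0:ℝ) L, γ t ∈ D := by
    by_contra hc
    push_neg at hc
    obtain ⟨t1, ht1, ht1n⟩ := hc
    obtain ⟨t0, ht0, hfr, -⟩ := exit_time hD (hγ.restrict ht1) hy ht1n
    have h1 : bdist D y ≤ dist y (γ t0) := bdist_le_dist hfr y
    have h2 : dist y (γ t0) ≤ t0 := by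
      have := hγ.dist_le (s := 0) (t := t0) ⟨le_rfl, hγ.nonneg⟩
        ⟨ht0.1, le_trans ht0.2 ht1.2⟩
      rw [hγ.source] at this
      rw [abs_of_nonpos (by linarith [ht0.1])] at this
      linarith
    have h3 : t0 ≤ L := le_trans ht0.2 ht1.2
    linarith
  exact ⟨γ, L, ⟨hγ.nonneg, hγ.lip, hγ.source, hγ.target, hall⟩, hL⟩

lemma join_conn {c : ℝ} (hc : 0 < c) (hX : QCSpace c X) {G : Set X} (hG : IsOpen G)
    (hconn : IsPreconnected G) (hpos : ∀ z ∈ G, 0 < bdist G z)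
    {x y : X} (hx : x ∈ G) (hy : y ∈ G) : ∃ γ L, CurveIn G γ L x y := by
  classical
  set S := {w : X | ∃ γ L, CurveIn G γ L x w} with hSdef
  by_cases hyS : y ∈ S
  · exact hyS
  set T := {w : X | w ∈ G ∧ w ∉ S} with hTdef
  have hSsub : S ⊆ G := by
    rintro w ⟨γ, L, h⟩
    rw [← h.target]
    exact h.mem L ⟨h.nonneg, le_rfl⟩
  have key : ∀ w ∈ G, ∀ z ∈ Metric.ball w (bdist G w / c), ∃ γ L, CurveIn G γ L w z := by
    intro w hw z hz
    have : c * dist w z < bdist G w := by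
      rw [Metric.mem_ball, dist_comm] at hz
      rw [lt_div_iff₀ hc] at hz
      linarith [hz]
    obtain ⟨γ, L, hγ, -⟩ := local_join hX hG hw this
    exact ⟨γ, L, hγ⟩
  have hSopen : IsOpen S := by
    rw [Metric.isOpen_iff]
    intro w hw
    have hwG := hSsub hw
    refine ⟨bdist G w / c, div_pos (hpos w hwG) hc, fun z hz => ?_⟩
    obtain ⟨γ₁, L₁, h₁⟩ := hw
    obtain ⟨γ₂, L₂, h₂⟩ := key w hwG z hz
    exact ⟨_, _, h₁.concat h₂⟩
  have hTopen : IsOpen T := by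
    rw [Metric.isOpen_iff]
    intro w hw
    refine ⟨bdist G w / c, div_pos (hpos w hw.1) hc, fun z hz => ?_⟩
    obtain ⟨γ₂, L₂, h₂⟩ := key w hw.1 z hz
    refine ⟨by rw [← h₂.target]; exact h₂.mem L₂ ⟨h₂.nonneg, le_rfl⟩, fun hzS => ?_⟩
    obtain ⟨γ₁, L₁, h₁⟩ := hzS
    exact hw.2 ⟨_, _, h₁.concat h₂.rev⟩
  have hcover : G ⊆ S ∪ T := fun w hw => by
    by_cases h : w ∈ S
    · exact Or.inl h
    · exact Or.inr ⟨hw, h⟩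
  have h1 : (G ∩ S).Nonempty := ⟨x, hx, ⟨_, _, CurveIn.const hx⟩⟩
  have h2 : (G ∩ T).Nonempty := ⟨y, hy, hy, hyS⟩
  obtain ⟨z, -, hzS, -, hzT⟩ := hconn S T hSopen hTopen hcover h1 h2
  exact absurd hzS hzT

end Aux2

section Aux3

open Real intervalIntegral MeasureTheory

variable {X : Type*} [MetricSpace X] {Y : Type*} [MetricSpace Y]

lemma qhLength_nonneg' {G : Set X} {γ : ℝ → X} {s t : ℝ} (h : s ≤ t) :
    0 ≤ qhLengthOn G γ s t :=
  intervalIntegral.integral_nonneg h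
    (fun u _ => one_div_nonneg.mpr (bdist_nonneg G (γ u)))

lemma qhDist_bddBelow (G : Set X) (x y : X) :
    BddBelow {l | ∃ γ L, CurveIn G γ L x y ∧ qhLength G γ L = l} := by
  refine ⟨0, ?_⟩
  rintro l ⟨γ, L, hγ, rfl⟩
  exact qhLength_nonneg' hγ.nonneg

lemma qhDist_nonneg (G : Set X) (x y : X) : 0 ≤ qhDist G x y := by
  apply Real.sInf_nonneg
  rintro l ⟨γ, L, hγ, rfl⟩
  exact qhLength_nonneg' hγ.nonneg

lemma qhDist_le_qhLength {G : Set X} {γ : ℝ → X} {L : ℝ} {x y : X}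
    (h : CurveIn G γ L x y) : qhDist G x y ≤ qhLength G γ L :=
  csInf_le (qhDist_bddBelow G x y) ⟨γ, L, h, rfl⟩

lemma bdist_comp_continuousOn {G : Set X} {γ : ℝ → X} {s : Set ℝ}
    (h : LipschitzOnWith 1 γ s) : ContinuousOn (fun u => bdist G (γ u)) s :=
  ((Metric.lipschitz_infDist_pt (frontier G)).comp_lipschitzOnWith h).continuousOn

lemma integrable_one_div_bdist {G : Set X} {γ : ℝ → X} {a b : ℝ} (hab : a ≤ b)
    (hlip : LipschitzOnWith 1 γ (Set.Icc a b))
    (hpos : ∀ u ∈ Set.Icc a b, 0 < bdist G (γ u)) :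
    IntervalIntegrable (fun u => 1 / bdist G (γ u)) volume a b := by
  apply ContinuousOn.intervalIntegrable
  rw [Set.uIcc_of_le hab]
  exact continuousOn_const.div (bdist_comp_continuousOn hlip)
    (fun u hu => (hpos u hu).ne')

/-- Along a unit-speed curve, if `bdist ≥ m > 0`, the qh length is at most `L/m`. -/
lemma qhLength_le_of_bdist_ge {G : Set X} {γ : ℝ → X} {L m : ℝ} {x y : X}
    (h : CurveIn G γ L x y) (hm : 0 < m)
    (hge : ∀ u ∈ Set.Icc 0 L, m ≤ bdist G (γ u)) :
    qhLength G γ L ≤ L / m := by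
  have hint : IntervalIntegrable (fun u => 1 / bdist G (γ u)) volume 0 L :=
    integrable_one_div_bdist h.nonneg h.lip (fun u hu => lt_of_lt_of_le hm (hge u hu))
  have : qhLengthOn G γ 0 L ≤ ∫ _ in (0:ℝ)..L, 1 / m := by
    apply intervalIntegral.integral_mono_on h.nonneg hint intervalIntegrable_const
    intro u hu
    exact one_div_le_one_div_of_le hm (hge u hu)
  simpa [qhLength, intervalIntegral.integral_const, smul_eq_mul, div_eq_mul_inv,
    one_mul] using this

lemma log_le_qhLength {G : Set X} {γ : ℝ → X} {L : ℝ} {x y : X}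
    (h : CurveIn G γ L x y) (hpos : ∀ z ∈ G, 0 < bdist G z) :
    Real.log (1 + dist x y / bdist G x) ≤ qhLength G γ L := by
  set b := bdist G x with hb
  have hxG : x ∈ G := by rw [← h.source]; exact h.mem 0 ⟨le_rfl, h.nonneg⟩
  have hbpos : 0 < b := hpos x hxG
  have hub : ∀ u ∈ Set.Icc (0:ℝ) L, bdist G (γ u) ≤ b + u := by
    intro u hu
    have h1 : bdist G (γ u) ≤ bdist G (γ 0) + dist (γ u) (γ 0) := bdist_le_add G _ _
    have h2 : dist (γ u) (γ 0) ≤ u := by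
      have := h.dist_le hu ⟨le_rfl, h.nonneg⟩
      rw [abs_of_nonneg (by linarith [hu.1])] at this
      linarith [this, hu.1]
    rw [h.source] at h1 h2
    linarith
  have hmono : ∫ u in (0:ℝ)..L, 1 / (b + u) ≤ qhLengthOn G γ 0 L := by
    apply intervalIntegral.integral_mono_on h.nonneg
    · apply ContinuousOn.intervalIntegrable
      rw [Set.uIcc_of_le h.nonneg]
      refine continuousOn_const.div (by fun_prop) (fun u hu => by nlinarith [hu.1])
    · exact integrable_one_div_bdist h.nonneg h.lip
        (fun u hu => hpos _ (h.mem u hu))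
    · intro u hu
      apply one_div_le_one_div_of_le (hpos _ (h.mem u hu)) (hub u hu)
  have hcomp : ∫ u in (0:ℝ)..L, 1 / (b + u) = Real.log ((b + L) / b) := by
    have := intervalIntegral.integral_comp_add_left (a := (0:ℝ)) (b := L)
      (fun v => 1 / v) b
    rw [this, add_zero]
    exact integral_one_div (by
      intro hmem
      rw [Set.uIcc_of_le (by linarith [h.nonneg])] at hmem
      linarith [hmem.1])
  have hlog : Real.log (1 + dist x y / b) ≤ Real.log ((b + L) / b) := by
    apply Real.log_le_log (by positivity)
    rw [add_div, div_self hbpos.ne']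
    have hd : dist x y ≤ L := by
      have := h.dist_le (s := 0) (t := L) ⟨le_rfl, h.nonneg⟩ ⟨h.nonneg, le_rfl⟩
      rw [h.source, h.target, abs_of_nonpos (by linarith [h.nonneg])] at this
      linarith
    gcongr
  calc Real.log (1 + dist x y / b) ≤ Real.log ((b + L) / b) := hlog
    _ = ∫ u in (0:ℝ)..L, 1 / (b + u) := hcomp.symm
    _ ≤ qhLengthOn G γ 0 L := hmono

lemma log_le_qhDist {G : Set X} {x y : X} (hpos : ∀ z ∈ G, 0 < bdist G z)
    (hne : ∃ γ L, CurveIn G γ L x y) :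
    Real.log (1 + dist x y / bdist G x) ≤ qhDist G x y := by
  obtain ⟨γ0, L0, h0⟩ := hne
  rw [qhDist]
  refine le_csInf ?_ ?_
  · exact ⟨_, γ0, L0, h0, rfl⟩
  · rintro l ⟨γ, L, hγ, rfl⟩
    exact log_le_qhLength hγ hpos

end Aux3




set_option maxHeartbeats 1000000

/-- key step of Lemma 11: If `f : G → G'` is `M`-quasihyperbolic,
`X` is `c`-quasiconvex and `Y` is `c'`-quasiconvex, then for every subdomain
`D ⊆ G` and every `x ∈ D`,
`δ_D(x)/δ_{f(D)}(f(x)) ≤ 6cc'M·δ_G(x)/δ_{G'}(f(x))`. -/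
theorem stmt16 {X : Type*} [MetricSpace X] {Y : Type*} [MetricSpace Y]
    (c c' M : ℝ) (hc : 1 ≤ c) (hc' : 1 ≤ c') (hM : 1 ≤ M)
    (hX : QCSpace c X) (hY : QCSpace c' Y)
    (G : Set X) (G' : Set Y) (hG : IsProperDomain G) (hG' : IsProperDomain G')
    (f : ↥G ≃ₜ ↥G') (hf : MQH M f)
    (D : Set X) (hD : D ⊆ G) (hDdom : IsDomainSet D)
    (x : X) (hx : x ∈ D) :
    bdist D x / bdist (imSet f D) ↑(f ⟨x, hD hx⟩) ≤
      6 * c * c' * M * (bdist G x / bdist G' ↑(f ⟨x, hD hx⟩)) := by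
  classical
  have hc0 : (0:ℝ) < c := by linarith
  have hc'0 : (0:ℝ) < c' := by linarith
  have hM0 : (0:ℝ) < M := by linarith
  haveI : PreconnectedSpace X := qcspace_preconnected hX
  haveI : PreconnectedSpace Y := qcspace_preconnected hY
  obtain ⟨hGo, hGc, hGu⟩ := hG
  obtain ⟨hG'o, hG'c, hG'u⟩ := hG'
  obtain ⟨hDo, hDc⟩ := hDdom
  set xG : ↥G := ⟨x, hD hx⟩ with hxGdef
  set x' : Y := ↑(f xG) with hx'def
  set D' : Set Y := imSet f D with hD'def
  have hx'G' : x' ∈ G' := (f xG).2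
  have hx'D' : x' ∈ D' := ⟨f xG, ⟨xG, hx, rfl⟩, rfl⟩
  have hD'G' : D' ⊆ G' := by rintro _ ⟨w, -, rfl⟩; exact w.2
  have hmemiff : ∀ z : ↥G, (z : X) ∈ D ↔ ((f z : ↥G') : Y) ∈ D' := by
    intro z
    constructor
    · intro hz; exact ⟨f z, ⟨z, hz, rfl⟩, rfl⟩
    · rintro ⟨-, ⟨w, hw, rfl⟩, hval⟩
      have h1 : f w = f z := Subtype.coe_injective hval
      have h2 : w = z := f.injective h1
      rw [← h2]; exact hw
  have hDne : D.Nonempty := hDc.nonempty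
  have hDnu : D ≠ Set.univ := fun h => hGu (Set.eq_univ_of_univ_subset (h ▸ hD))
  have hfG : (frontier G).Nonempty := frontier_nonempty' hGc.nonempty hGu
  have hfG' : (frontier G').Nonempty := frontier_nonempty' hG'c.nonempty hG'u
  have hfD : (frontier D).Nonempty := frontier_nonempty' hDne hDnu
  have hD'open : IsOpen D' := by
    apply hG'o.isOpenMap_subtype_val
    rw [Homeomorph.isOpen_image]
    exact hDo.preimage continuous_subtype_val
  have hD'nu : D' ≠ Set.univ := fun h => hG'u (Set.eq_univ_of_univ_subset (h ▸ hD'G'))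
  have hfD' : (frontier D').Nonempty := frontier_nonempty' ⟨x', hx'D'⟩ hD'nu
  set r : ℝ := bdist D x with hrdef
  set d : ℝ := bdist G x with hddef
  set r' : ℝ := bdist D' x' with hr'def
  set d' : ℝ := bdist G' x' with hd'def
  have hr' : 0 < r' := bdist_pos hD'open hx'D' hfD'
  have hd' : 0 < d' := bdist_pos hG'o hx'G' hfG'
  have hd : 0 < d := bdist_pos hGo (hD hx) hfG
  have hr : 0 ≤ r := bdist_nonneg D x
  have hposG : ∀ z ∈ G, 0 < bdist G z := fun z hz => bdist_pos hGo hz hfG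
  -- r ≤ c * d
  have hwall : ∀ w, w ∉ D → r ≤ c * dist x w := by
    intro w hwD
    by_contra hcon
    push_neg at hcon
    obtain ⟨γ, L, hγ, -⟩ := local_join hX hDo hx hcon
    exact hwD (by rw [← hγ.target]; exact hγ.mem L ⟨hγ.nonneg, le_rfl⟩)
  have hrcd : r ≤ c * d := by
    by_contra hcon
    push_neg at hcon
    have h1 : Metric.infDist x (frontier G) < r / c := by
      rw [← bdist, ← hddef]
      rw [lt_div_iff₀ hc0] at *
      linarith
    obtain ⟨w, hwfr, hwlt⟩ := (Metric.infDist_lt_iff hfG).mp h1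
    have hwD : w ∉ D := fun h => (hGo.frontier_eq ▸ hwfr).2 (hD h)
    have := hwall w hwD
    rw [lt_div_iff₀ hc0] at hwlt
    nlinarith
  -- reduce goal to product form
  rw [show 6 * c * c' * M * (d / d') = 6 * c * c' * M * d / d' by ring,
    div_le_div_iff₀ hr' hd']
  rcases le_total d' (6 * c' * M * r') with hcase | hcase
  · calc r * d' ≤ (c * d) * (6 * c' * M * r') :=
        mul_le_mul hrcd hcase hd'.le (by positivity)
      _ = 6 * c * c' * M * d * r' := by ring
  · -- main case
    have h2r : Metric.infDist x' (frontier D') < 2 * r' := by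
      rw [← bdist, ← hr'def]; linarith
    obtain ⟨w', hw'fr, hw'lt⟩ := (Metric.infDist_lt_iff hfD').mp h2r
    obtain ⟨γ', L', hγ', hL'len⟩ := hY x' w'
    have hL'2 : L' ≤ 2 * c' * r' := by nlinarith
    have hL'd : 3 * L' ≤ d' := by nlinarith
    have hL'0 : 0 ≤ L' := hγ'.nonneg
    have hw'nD' : w' ∉ D' := (hD'open.frontier_eq ▸ hw'fr).2
    obtain ⟨t0, ht0mem, ht0fr, hbef⟩ := exit_time hD'open hγ' hx'D' hw'nD'
    have ht0nD' : γ' t0 ∉ D' := (hD'open.frontier_eq ▸ ht0fr).2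
    have ht0pos : 0 < t0 := by
      rcases lt_or_eq_of_le ht0mem.1 with h | h
      · exact h
      · exact absurd (by rw [← h, hγ'.source]; exact hx'D') ht0nD'
    have hbG' : ∀ u ∈ Set.Icc (0:ℝ) t0, 2 * d' / 3 ≤ bdist G' (γ' u) := by
      intro u hu
      have h1 : bdist G' x' ≤ bdist G' (γ' u) + dist x' (γ' u) := bdist_le_add G' x' (γ' u)
      have h2 : dist x' (γ' u) ≤ u := by
        have := hγ'.dist_le (s := 0) (t := u) ⟨le_rfl, hL'0⟩
          ⟨hu.1, hu.2.trans ht0mem.2⟩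
        rw [hγ'.source, abs_of_nonpos (by linarith [hu.1])] at this
        linarith
      have h3 : u ≤ L' := hu.2.trans ht0mem.2
      rw [← hd'def] at h1
      linarith
    have hγ't0G' : γ' t0 ∈ G' := by
      by_contra hcon
      have h1 : γ' t0 ∈ closure G' := closure_mono hD'G' (frontier_subset_closure ht0fr)
      have h2 : γ' t0 ∈ frontier G' := ⟨h1, by rwa [hG'o.interior_eq]⟩
      have h3 : bdist G' (γ' t0) = 0 := Metric.infDist_zero_of_mem h2
      have := hbG' t0 ⟨ht0pos.le, le_rfl⟩
      rw [h3] at this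
      linarith
    have hmemG' : ∀ u : Set.Icc (0:ℝ) t0, γ' ↑u ∈ G' := by
      rintro ⟨u, hu⟩
      show γ' u ∈ G'
      rcases lt_or_eq_of_le hu.2 with h | h
      · exact hD'G' (hbef u hu.1 h)
      · rw [h]; exact hγ't0G'
    set g : Set.Icc (0:ℝ) t0 → X := fun u => ↑(f.symm ⟨γ' ↑u, hmemG' u⟩) with hgdef
    have hgcont : Continuous g := by
      have h1 : Continuous (fun u : Set.Icc (0:ℝ) t0 => γ' (u:ℝ)) := by
        have := (hγ'.lip.mono (Set.Icc_subset_Icc le_rfl ht0mem.2)).continuousOn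
        exact this.restrict
      exact continuous_subtype_val.comp
        (f.symm.continuous.comp (h1.subtype_mk hmemG'))
    set T0 : Set.Icc (0:ℝ) t0 := ⟨t0, ht0pos.le, le_rfl⟩ with hT0def
    set ζ : X := g T0 with hζdef
    have hζG : ζ ∈ G := (f.symm ⟨γ' t0, hγ't0G'⟩).2
    have hζnD : ζ ∉ D := by
      intro hmem
      have := (hmemiff (f.symm ⟨γ' t0, hγ't0G'⟩)).mp hmem
      rw [Homeomorph.apply_symm_apply] at this
      exact ht0nD' this
    -- the ε-approximation bound
    have hkey : ∀ ε : ℝ, 0 < ε → r ≤ 6 * c' * M * r' * d / d' + c * ε := by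
      intro ε hε
      obtain ⟨δ, hδpos, hδ⟩ := Metric.continuous_iff.mp hgcont T0 ε hε
      set η := min (δ / 2) (t0 / 2) with hηdef
      have hηpos : 0 < η := lt_min (by linarith) (by linarith)
      set t : ℝ := t0 - η with htdef
      have ht0le : 0 ≤ t := by
        have := min_le_right (δ / 2) (t0 / 2); simp only [htdef]; linarith
      have htlt : t < t0 := by simp only [htdef]; linarith
      set T : Set.Icc (0:ℝ) t0 := ⟨t, ht0le, htlt.le⟩ with hTdef
      have hdistT : dist T T0 < δ := by
        rw [Subtype.dist_eq, Real.dist_eq]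
        have h1 : η ≤ δ / 2 := min_le_left _ _
        rw [show (T:ℝ) - (T0:ℝ) = -η by simp [hTdef, hT0def, htdef]]
        rw [abs_neg, abs_of_pos hηpos]
        linarith
      have hgε : dist (g T) ζ < ε := hδ T hdistT
      set y : X := g T with hydef
      have hyG : y ∈ G := (f.symm ⟨γ' t, hmemG' T⟩).2
      have hy'D' : γ' t ∈ D' := hbef t ht0le htlt
      have hyD : y ∈ D := by
        have := (hmemiff (f.symm ⟨γ' t, hmemG' T⟩)).mpr
        rw [Homeomorph.apply_symm_apply] at this
        exact this hy'D'
      -- qh upper bound in G'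
      have hcurve : CurveIn G' γ' t x' (γ' t) :=
        ⟨ht0le, hγ'.lip.mono (Set.Icc_subset_Icc le_rfl (htlt.le.trans ht0mem.2)),
          hγ'.source, rfl,
          fun u hu => hD'G' (hbef u hu.1 (lt_of_le_of_lt hu.2 htlt))⟩
      have hk' : qhDist G' x' (γ' t) ≤ 3 * c' * r' / d' := by
        have h1 := qhDist_le_qhLength hcurve
        have h2 := qhLength_le_of_bdist_ge hcurve (m := 2 * d' / 3) (by positivity)
          (fun u hu => hbG' u ⟨hu.1, hu.2.trans htlt.le⟩)
        have h3 : t / (2 * d' / 3) ≤ 3 * c' * r' / d' := by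
          rw [div_le_div_iff₀ (by positivity) hd']
          have ht2 : t ≤ 2 * c' * r' := by
            have : t ≤ L' := htlt.le.trans ht0mem.2
            linarith
          nlinarith
        linarith
      -- MQH transfer
      have htrans := (hf xG (f.symm ⟨γ' t, hmemG' T⟩)).1
      rw [Homeomorph.apply_symm_apply] at htrans
      have hkG : qhDist G x y ≤ M * (3 * c' * r' / d') := by
        have h1 : (1 / M) * qhDist G x y ≤ qhDist G' x' (γ' t) := htrans
        calc qhDist G x y = M * ((1 / M) * qhDist G x y) := by field_simp
          _ ≤ M * (3 * c' * r' / d') := by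
              apply mul_le_mul_of_nonneg_left (h1.trans hk') hM0.le
      set uu : ℝ := M * (3 * c' * r' / d') with huudef
      have huu0 : 0 ≤ uu := by positivity
      have huu1 : uu ≤ 1 / 2 := by
        rw [huudef, show M * (3 * c' * r' / d') = 3 * c' * M * r' / d' by ring,
          div_le_iff₀ hd']
        linarith
      have hexp : Real.exp uu - 1 ≤ 2 * uu := by
        have h1 : (0:ℝ) < 1 - uu := by linarith
        have h2 : 1 - uu ≤ Real.exp (-uu) := by linarith [Real.add_one_le_exp (-uu)]
        have h3 : Real.exp uu ≤ 1 / (1 - uu) := by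
          rw [le_div_iff₀ h1]
          calc Real.exp uu * (1 - uu) ≤ Real.exp uu * Real.exp (-uu) :=
              mul_le_mul_of_nonneg_left h2 (Real.exp_nonneg uu)
            _ = 1 := by rw [← Real.exp_add]; simp
        have h4 : 1 / (1 - uu) - 1 = uu / (1 - uu) := by field_simp; ring
        have h5 : uu / (1 - uu) ≤ 2 * uu := by
          rw [div_le_iff₀ h1]; nlinarith
        linarith
      -- distance bound
      have hjoin : ∃ γ L, CurveIn G γ L x y := join_conn hc0 hX hGo
        hGc.isPreconnected hposG (hD hx) hyG
      have hlog := log_le_qhDist hposG hjoin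
      rw [← hddef] at hlog
      have hexp1 : 1 + dist x y / d ≤ Real.exp (qhDist G x y) :=
        (Real.log_le_iff_le_exp (by positivity)).mp hlog
      have hexp2 : Real.exp (qhDist G x y) ≤ Real.exp uu :=
        Real.exp_le_exp.mpr hkG
      have hdxy : dist x y ≤ d * (2 * uu) := by
        have h1 : dist x y / d ≤ 2 * uu := by linarith
        calc dist x y = d * (dist x y / d) := by field_simp
          _ ≤ d * (2 * uu) := mul_le_mul_of_nonneg_left h1 hd.le
      -- boundary distance of y in D
      have hbDy : bdist D y ≤ c * dist y ζ := by
        by_contra hcon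
        push_neg at hcon
        obtain ⟨γ0, L0, h0, -⟩ := local_join hX hDo hyD hcon
        exact hζnD (by rw [← h0.target]; exact h0.mem L0 ⟨h0.nonneg, le_rfl⟩)
      have hfinal : r ≤ bdist D y + dist x y := by
        have := bdist_le_add D x y
        rw [← hrdef] at this
        linarith
      have hyζ : dist y ζ < ε := hgε
      have huueq : d * (2 * uu) = 6 * c' * M * r' * d / d' := by
        rw [huudef]; field_simp; ring
      calc r ≤ bdist D y + dist x y := hfinal
        _ ≤ c * dist y ζ + d * (2 * uu) := by linarith
        _ ≤ 6 * c' * M * r' * d / d' + c * ε := by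
            have h9 : c * dist y ζ ≤ c * ε :=
              mul_le_mul_of_nonneg_left hyζ.le hc0.le
            linarith [huueq.le, huueq.ge]
    -- conclude from the ε bound
    have hrle : r ≤ 6 * c' * M * r' * d / d' := by
      by_contra hcon
      push_neg at hcon
      set A := 6 * c' * M * r' * d / d' with hAdef
      have hε : 0 < (r - A) / (2 * c) := by
        apply div_pos (by linarith) (by linarith)
      have := hkey ((r - A) / (2 * c)) hε
      rw [show c * ((r - A) / (2 * c)) = (r - A) / 2 by field_simp] at this
      linarith
    have : r * d' ≤ 6 * c' * M * r' * d := by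
      rw [le_div_iff₀ hd'] at hrle
      linarith
    have h2 : 6 * c' * M * r' * d ≤ c * (6 * c' * M * r' * d) :=
      le_mul_of_one_le_left (by positivity) hc
    have h3 : c * (6 * c' * M * r' * d) = 6 * c * c' * M * d * r' := by ring
    linarith
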